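/- Suppose M has rank r, Z satisfies ‖Z‖_op ≤ λ, and M̂ = T_λ(M + Z) where T_λ is singular-value soft-thresholding. Then ‖M̂ - M‖_F² ≤ 8 λ² r. -/

import Mathlib

/-!
With `M + Z = U Σ Vᵀ`, the residual `M̂ - (M + Z) = U D Vᵀ` has diagonal `D` with `|Dᵢᵢ| ≤ λ`, so
`‖M̂ - M‖_op ≤ ‖M̂ - (M + Z)‖_op + ‖Z‖_op ≤ 2λ`. On the span of the right singular vectors with
`σᵢ > λ`, `M + Z` stretches every vector by more than `λ ≥ ‖Z‖_op`, so `M` is injective there and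
`rank M̂ = #{i | σᵢ > λ} ≤ rank M`; hence `rank (M̂ - M) ≤ 2r`. Finally `‖A‖_F² ≤ rank A · ‖A‖_op²`:
expanding the columns of `A` in an orthonormal basis `(bᵢ)` of its range gives
`‖A‖_F² = ∑ᵢ ‖A* bᵢ‖² ≤ rank A · ‖A‖_op²`.
-/

open Matrix

def frobSq {n : ℕ} (A : Matrix (Fin n) (Fin n) ℝ) : ℝ := ∑ i, ∑ j, (A i j) ^ 2

noncomputable def opN {n : ℕ} (A : Matrix (Fin n) (Fin n) ℝ) : ℝ :=
  ‖Matrix.toEuclideanCLM (𝕜 := ℝ) A‖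

open Module
open scoped Matrix.Norms.L2Operator

theorem LinearMap.finrank_le_finrank_range_of_norm_lt {𝕜 E F : Type*} [Field 𝕜]
    [AddCommGroup E] [Module 𝕜 E] [FiniteDimensional 𝕜 E] [NormedAddCommGroup F] [Module 𝕜 F]
    (A B : E →ₗ[𝕜] F) (W : Submodule 𝕜 E) (h : ∀ x ∈ W, x ≠ 0 → ‖B x‖ < ‖(A + B) x‖) :
    finrank 𝕜 W ≤ finrank 𝕜 (range A) := by
  have hinj : Function.Injective (A ∘ₗ W.subtype) := by
    refine (injective_iff_map_eq_zero _).mpr fun x hAx => ?_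
    by_contra hx
    have hlt := h x x.2 (by simpa using hx)
    rw [add_apply, show A x = 0 from hAx, zero_add] at hlt
    exact lt_irrefl _ hlt
  calc finrank 𝕜 W = finrank 𝕜 (range (A ∘ₗ W.subtype)) := (finrank_range_of_inj hinj).symm
    _ ≤ finrank 𝕜 (range A) := Submodule.finrank_mono (range_comp_le_range _ _)

theorem ContinuousLinearMap.sum_norm_apply_sq_le_finrank_range_mul_opNorm_sq
    {𝕜 E F ι : Type*} [RCLike 𝕜] [Fintype ι]
    [NormedAddCommGroup E] [InnerProductSpace 𝕜 E] [FiniteDimensional 𝕜 E]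
    [NormedAddCommGroup F] [InnerProductSpace 𝕜 F] [CompleteSpace F]
    (T : E →L[𝕜] F) (e : OrthonormalBasis ι 𝕜 E) :
    ∑ j, ‖T (e j)‖ ^ 2 ≤ finrank 𝕜 (LinearMap.range (T : E →ₗ[𝕜] F)) * ‖T‖ ^ 2 := by
  have := FiniteDimensional.complete 𝕜 E
  set b := stdOrthonormalBasis 𝕜 (LinearMap.range (T : E →ₗ[𝕜] F))
  have parseval : ∀ j, ‖T (e j)‖ ^ 2 = ∑ i, ‖inner 𝕜 (b i : F) (T (e j))‖ ^ 2 := fun j =>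
    (b.sum_sq_norm_inner_right ⟨T (e j), LinearMap.mem_range_self (T : E →ₗ[𝕜] F) _⟩).symm
  calc ∑ j, ‖T (e j)‖ ^ 2 = ∑ i, ∑ j, ‖inner 𝕜 (adjoint T (b i)) (e j)‖ ^ 2 := by
        simp_rw [parseval, adjoint_inner_left]
        exact Finset.sum_comm
    _ = ∑ i, ‖adjoint T (b i)‖ ^ 2 := by simp_rw [e.sum_sq_norm_inner_left]
    _ ≤ ∑ _i, ‖T‖ ^ 2 := by
        gcongr with i
        calc ‖adjoint T (b i)‖ ≤ ‖adjoint T‖ * ‖(b i : F)‖ := (adjoint T).le_opNorm _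
          _ = ‖T‖ := by rw [adjoint.norm_map, show ‖(b i : F)‖ = 1 from b.orthonormal.1 i, mul_one]
    _ = finrank 𝕜 (LinearMap.range (T : E →ₗ[𝕜] F)) * ‖T‖ ^ 2 := by simp

theorem abs_max_sub_zero_sub_le {s l : ℝ} (hs : 0 ≤ s) (hl : 0 ≤ l) :
    |max (s - l) 0 - s| ≤ l :=
  abs_le.mpr ⟨by linarith [le_max_left (s - l) 0],
    by linarith [max_le (by linarith : s - l ≤ s) hs]⟩

namespace Matrix

section Rank

variable {m n K : Type*} [Fintype n] [Field K]

theorem rank_add_le (A B : Matrix m n K) :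
    (A + B).rank ≤ A.rank + B.rank := by
  rw [rank, rank, rank, mulVecLin_add]
  exact (Submodule.finrank_mono (LinearMap.range_add_le _ _)).trans
    (Submodule.finrank_add_le_finrank_add_finrank _ _)

theorem rank_sub_le (A B : Matrix m n K) :
    (A - B).rank ≤ A.rank + B.rank := by
  have hneg : (-B).rank = B.rank := by
    rw [rank, rank, show (-B).mulVecLin = -B.mulVecLin by ext; simp, LinearMap.range_neg]
  simpa [sub_eq_add_neg, hneg] using rank_add_le A (-B)

end Rank

section L2

variable {m n 𝕜 : Type*} [Fintype m] [Fintype n] [DecidableEq n] [RCLike 𝕜]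

theorem finrank_range_toEuclideanLin (A : Matrix m n 𝕜) :
    finrank 𝕜 (LinearMap.range (toEuclideanLin A)) = A.rank := by
  rw [toEuclideanLin_eq_toLin_orthonormal, rank_eq_finrank_range_toLin A
    (EuclideanSpace.basisFun m 𝕜).toBasis (EuclideanSpace.basisFun n 𝕜).toBasis]

theorem sum_norm_sq_le_rank_mul_l2_opNorm_sq (A : Matrix m n 𝕜) :
    ∑ i, ∑ j, ‖A i j‖ ^ 2 ≤ A.rank * ‖A‖ ^ 2 := by
  have hT := ContinuousLinearMap.sum_norm_apply_sq_le_finrank_range_mul_opNorm_sq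
    (LinearMap.toContinuousLinearMap (toEuclideanLin A)) (EuclideanSpace.basisFun n 𝕜)
  rw [LinearMap.coe_toContinuousLinearMap, finrank_range_toEuclideanLin] at hT
  rw [Finset.sum_comm]
  convert hT using 2 with j
  · simp [EuclideanSpace.norm_sq_eq]
  · rfl

end L2

section Real

variable {n : Type*} [Fintype n] [DecidableEq n]

theorem mem_unitary_of_mul_transpose_eq_one {U : Matrix n n ℝ} (hU : U * Uᵀ = 1) :
    U ∈ unitary (Matrix n n ℝ) :=
  mem_unitaryGroup_iff.mpr (by rwa [star_eq_conjTranspose, conjTranspose_eq_transpose_of_trivial])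

theorem mul_norm_lt_norm_toEuclideanCLM_diagonal {σ : n → ℝ} {lam : ℝ} (hlam : 0 ≤ lam)
    {x : EuclideanSpace ℝ n} (hx : x ≠ 0) (hσ : ∀ i, x i ≠ 0 → lam < σ i) :
    lam * ‖x‖ < ‖toEuclideanCLM (𝕜 := ℝ) (diagonal σ) x‖ := by
  obtain ⟨i₀, hi₀⟩ : ∃ i, x i ≠ 0 := by
    by_contra! h
    exact hx (PiLp.ext h)
  have hterm : ∀ i, lam ^ 2 * x i ^ 2 ≤ (σ i * x i) ^ 2 := fun i => by
    by_cases hxi : x i = 0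
    · simp [hxi]
    · rw [mul_pow]
      gcongr
      exact (hσ i hxi).le
  refine (pow_lt_pow_iff_left₀ (by positivity) (norm_nonneg _) two_ne_zero).mp ?_
  rw [mul_pow, EuclideanSpace.real_norm_sq_eq, EuclideanSpace.real_norm_sq_eq, Finset.mul_sum]
  simp only [ofLp_toEuclideanCLM, mulVec_diagonal]
  refine Finset.sum_lt_sum (fun i _ => hterm i) ⟨i₀, Finset.mem_univ _, ?_⟩
  rw [mul_pow]
  gcongr
  exact hσ i₀ hi₀

theorem rank_diagonal_le_rank_of_add_eq_svd {M Z U V : Matrix n n ℝ} {σ d : n → ℝ} {lam : ℝ}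
    (hlam : 0 ≤ lam) (hZ : ‖Z‖ ≤ lam) (hU : U * Uᵀ = 1) (hV : V * Vᵀ = 1)
    (hSVD : M + Z = U * diagonal σ * Vᵀ) (hd : ∀ i, d i ≠ 0 → lam < σ i) :
    (diagonal d).rank ≤ M.rank := by
  have hVV : Vᵀ * V = 1 := mul_eq_one_comm.mp hV
  have hMZV : (M + Z) * V = U * diagonal σ := by
    rw [hSVD, Matrix.mul_assoc, hVV, Matrix.mul_one]
  have hUx : ∀ x, ‖toEuclideanCLM (𝕜 := ℝ) U x‖ = ‖x‖ :=
    ContinuousLinearMap.norm_map_of_mem_unitary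
      (Unitary.map_mem _ (mem_unitary_of_mul_transpose_eq_one hU))
  have hZV : ‖Z * V‖ ≤ lam :=
    (CStarRing.norm_mul_mem_unitary Z (mem_unitary_of_mul_transpose_eq_one hV)).trans_le hZ
  rw [← finrank_range_toEuclideanLin, ← rank_mul_eq_left_of_isUnit_det V M
    (isUnit_det_of_right_inverse hV), ← finrank_range_toEuclideanLin]
  refine LinearMap.finrank_le_finrank_range_of_norm_lt (toEuclideanLin (M * V))
    (toEuclideanLin (Z * V)) _ ?_
  rintro _ ⟨y, rfl⟩ hx
  set x := toEuclideanLin (diagonal d) y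
  have hσx : ∀ i, x i ≠ 0 → lam < σ i := fun i hi =>
    hd i (left_ne_zero_of_mul (by simpa [x, mulVec_diagonal] using hi))
  calc ‖toEuclideanLin (Z * V) x‖ ≤ ‖Z * V‖ * ‖x‖ := (toEuclideanCLM (𝕜 := ℝ) (Z * V)).le_opNorm x
    _ ≤ lam * ‖x‖ := by gcongr
    _ < ‖toEuclideanCLM (𝕜 := ℝ) (diagonal σ) x‖ :=
        mul_norm_lt_norm_toEuclideanCLM_diagonal hlam hx hσx
    _ = ‖toEuclideanCLM (𝕜 := ℝ) U (toEuclideanCLM (𝕜 := ℝ) (diagonal σ) x)‖ := (hUx _).symm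
    _ = ‖(toEuclideanLin (M * V) + toEuclideanLin (Z * V)) x‖ := by
        rw [← map_add, ← Matrix.add_mul, hMZV, ← coe_toEuclideanCLM_eq_toEuclideanLin, map_mul]
        rfl

theorem l2_opNorm_svd_softThreshold_sub_le {U V : Matrix n n ℝ} {σ : n → ℝ} {lam : ℝ}
    (hlam : 0 ≤ lam) (hσ : ∀ i, 0 ≤ σ i) (hU : U * Uᵀ = 1) (hV : V * Vᵀ = 1) :
    ‖U * diagonal (fun i => max (σ i - lam) 0) * Vᵀ - U * diagonal σ * Vᵀ‖ ≤ lam := by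
  have hVt : Vᵀ ∈ unitary (Matrix n n ℝ) :=
    mem_unitary_of_mul_transpose_eq_one (by rw [transpose_transpose]; exact mul_eq_one_comm.mp hV)
  rw [← Matrix.sub_mul, ← Matrix.mul_sub, diagonal_sub, CStarRing.norm_mul_mem_unitary _ hVt,
    CStarRing.norm_mem_unitary_mul _ (mem_unitary_of_mul_transpose_eq_one hU), l2_opNorm_diagonal]
  refine (pi_norm_le_iff_of_nonneg hlam).mpr fun i => ?_
  simpa [Real.norm_eq_abs] using abs_max_sub_zero_sub_le (hσ i) hlam

end Real

end Matrix

/-- If `rank M = r`, `‖Z‖_op ≤ λ`, and `M̂ = T_λ(M + Z)` is the singular-value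
soft-thresholding of `M + Z` (given through an SVD), then `‖M̂ - M‖_F² ≤ 8 λ² r`. -/
theorem soft_threshold_denoise_frobSq (n r : ℕ) (lam : ℝ) (hlam : 0 ≤ lam)
    (M Z : Matrix (Fin n) (Fin n) ℝ) (hrank : M.rank = r) (hZ : opN Z ≤ lam)
    (U V : Matrix (Fin n) (Fin n) ℝ) (σ : Fin n → ℝ)
    (hU : U * Uᵀ = 1) (hV : V * Vᵀ = 1) (hσ : ∀ i, 0 ≤ σ i)
    (hSVD : M + Z = U * Matrix.diagonal σ * Vᵀ)
    (Mhat : Matrix (Fin n) (Fin n) ℝ)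
    (hMhat : Mhat = U * Matrix.diagonal (fun i => max (σ i - lam) 0) * Vᵀ) :
    frobSq (Mhat - M) ≤ 8 * lam ^ 2 * r := by
  have hZ' : ‖Z‖ ≤ lam := hZ
  have hthreshold : ∀ i, max (σ i - lam) 0 ≠ 0 → lam < σ i := fun i hi => by
    contrapose! hi
    exact max_eq_right (by linarith)
  have hrankMhat : Mhat.rank ≤ r := calc
    Mhat.rank ≤ (diagonal fun i => max (σ i - lam) 0).rank := by
      rw [hMhat]
      exact (rank_mul_le_left _ _).trans (rank_mul_le_right _ _)
    _ ≤ M.rank := rank_diagonal_le_rank_of_add_eq_svd hlam hZ' hU hV hSVD hthreshold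
    _ = r := hrank
  have hresidual : ‖Mhat - (M + Z)‖ ≤ lam := by
    rw [hMhat, hSVD]
    exact l2_opNorm_svd_softThreshold_sub_le hlam hσ hU hV
  have hnorm : ‖Mhat - M‖ ≤ 2 * lam := calc
    ‖Mhat - M‖ = ‖(Mhat - (M + Z)) + Z‖ := by abel_nf
    _ ≤ ‖Mhat - (M + Z)‖ + ‖Z‖ := norm_add_le _ _
    _ ≤ 2 * lam := by linarith
  calc frobSq (Mhat - M) ≤ (Mhat - M).rank * ‖Mhat - M‖ ^ 2 := by
        simpa [frobSq, Real.norm_eq_abs, sq_abs] using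
          sum_norm_sq_le_rank_mul_l2_opNorm_sq (Mhat - M)
    _ ≤ (2 * r : ℕ) * (2 * lam) ^ 2 := by
        gcongr
        linarith [rank_sub_le Mhat M]
    _ = 8 * lam ^ 2 * r := by push_cast; ring
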